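/- arXiv:1712.08481 — 9 statements merged into one kernel-verified Lean document; each statement's English description precedes it below -/
import Mathlib

section
/- If a random variable a has density πx·erfc(√π·x/2) on (0,∞), then E[a] = 8/(3π) and E[a²] = 3/π. -/
/-! Integrating by parts against `x ^ (k + 1) / (k + 1)` turns `∫₀^∞ x ^ k erfc (c x) dx` into the
Gaussian moment `2c / ((k + 1) √π) ∫₀^∞ x ^ (k + 1) exp (-c² x²) dx`, which is a Gamma value:
`Γ ((k + 2) / 2) / ((k + 1) √π c ^ (k + 1))`. The boundary term at infinity vanishes because of the
tail bound `∫ₜ^∞ exp (-s²) ds ≤ exp (-t²) / (2t)`. The two moments of the density are the cases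
`k = 2, 3` with `c = √π / 2`, where `Γ 2 = 1` and `Γ (5/2) = 3√π/4`. -/

open Real MeasureTheory

/-- The complementary error function. -/
noncomputable def erfc (t : ℝ) : ℝ := (2 / Real.sqrt π) * ∫ s in Set.Ioi t, Real.exp (-s ^ 2)

open Set Filter Topology

theorem hasDerivAt_integral_Ioi {E : Type*} [NormedAddCommGroup E] [NormedSpace ℝ E]
    [CompleteSpace E] {f : ℝ → E} (hf : Continuous f) (hfi : Integrable f) (t : ℝ) :
    HasDerivAt (fun u => ∫ s in Ioi u, f s) (-f t) t := by
  have h : (fun u => ∫ s in Ioi u, f s) = fun u => (∫ s in Ioi 0, f s) - ∫ s in 0..u, f s := by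
    funext u
    rw [← intervalIntegral.integral_Ioi_sub_Ioi' hfi.integrableOn hfi.integrableOn, sub_sub_cancel]
  rw [h]
  exact (hf.integral_hasStrictDerivAt 0 t).hasDerivAt.const_sub _

lemma integrable_exp_neg_sq : Integrable fun s : ℝ => exp (-s ^ 2) := by
  simpa using integrable_exp_neg_mul_sq one_pos

lemma hasDerivAt_erfc (t : ℝ) : HasDerivAt erfc (-(2 / √π * exp (-t ^ 2))) t := by
  have := (hasDerivAt_integral_Ioi (by fun_prop) integrable_exp_neg_sq t).const_mul (2 / √π)
  rwa [mul_neg] at this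

lemma erfc_nonneg (t : ℝ) : 0 ≤ erfc t :=
  mul_nonneg (by positivity) (setIntegral_nonneg measurableSet_Ioi fun _ _ => (exp_pos _).le)

lemma integral_Ioi_exp_neg_sq_le {t : ℝ} (ht : 0 < t) :
    ∫ s in Ioi t, exp (-s ^ 2) ≤ exp (-t ^ 2) / (2 * t) := by
  have hderiv : ∀ s ∈ Ici t, HasDerivAt (fun s => -exp (-s ^ 2) / (2 * t))
      (s / t * exp (-s ^ 2)) s := by
    intro s _
    refine ((((hasDerivAt_pow 2 s).fun_neg.exp).fun_neg).div_const (2 * t)).congr_deriv ?_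
    field_simp
    ring
  have hnonneg : ∀ s ∈ Ioi t, 0 ≤ s / t * exp (-s ^ 2) := fun s hs =>
    mul_nonneg (div_nonneg (ht.trans hs).le ht.le) (exp_pos _).le
  have hlim : Tendsto (fun s => -exp (-s ^ 2) / (2 * t)) atTop (𝓝 0) := by
    have hsq := tendsto_neg_atTop_atBot.comp (tendsto_pow_atTop (α := ℝ) two_ne_zero)
    simpa using ((tendsto_exp_atBot.comp hsq).neg).div_const (2 * t)
  calc ∫ s in Ioi t, exp (-s ^ 2)
      ≤ ∫ s in Ioi t, s / t * exp (-s ^ 2) := by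
        refine setIntegral_mono_on integrable_exp_neg_sq.integrableOn
          (integrableOn_Ioi_deriv_of_nonneg' hderiv hnonneg hlim) measurableSet_Ioi fun s hs => ?_
        exact le_mul_of_one_le_left (exp_pos _).le ((one_le_div ht).mpr hs.le)
    _ = exp (-t ^ 2) / (2 * t) := by
        rw [integral_Ioi_of_hasDerivAt_of_nonneg' hderiv hnonneg hlim]
        ring

lemma tendsto_pow_mul_exp_neg_mul_sq_atTop {b : ℝ} (hb : 0 < b) (n : ℕ) :
    Tendsto (fun x : ℝ => x ^ n * exp (-b * x ^ 2)) atTop (𝓝 0) := by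
  refine ((tendsto_rpow_abs_mul_exp_neg_mul_sq_cocompact hb n).mono_left
    atTop_le_cocompact).congr' ?_
  filter_upwards [eventually_ge_atTop 0] with x hx
  rw [abs_of_nonneg hx, rpow_natCast]

lemma tendsto_pow_succ_mul_erfc_mul {c : ℝ} (hc : 0 < c) (n : ℕ) :
    Tendsto (fun x => x ^ (n + 1) * erfc (c * x)) atTop (𝓝 0) := by
  have hbound := (tendsto_pow_mul_exp_neg_mul_sq_atTop (pow_pos hc 2) n).const_mul (1 / (c * √π))
  rw [mul_zero] at hbound
  refine squeeze_zero' ?_ ?_ hbound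
  · filter_upwards [eventually_ge_atTop 0] with x hx
    exact mul_nonneg (pow_nonneg hx _) (erfc_nonneg _)
  · filter_upwards [eventually_gt_atTop 0] with x hx
    have hcx : 0 < c * x := mul_pos hc hx
    calc x ^ (n + 1) * erfc (c * x)
        ≤ x ^ (n + 1) * (2 / √π * (exp (-(c * x) ^ 2) / (2 * (c * x)))) := by
          unfold erfc
          gcongr
          exact integral_Ioi_exp_neg_sq_le hcx
      _ = 1 / (c * √π) * (x ^ n * exp (-c ^ 2 * x ^ 2)) := by
          rw [mul_pow, neg_mul]
          field_simp
          ring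

theorem integral_pow_mul_exp_neg_mul_sq {b : ℝ} (hb : 0 < b) (k : ℕ) :
    ∫ x in Ioi 0, x ^ k * exp (-b * x ^ 2) = Gamma ((k + 1) / 2) / (2 * b ^ ((k + 1) / 2 : ℝ)) := by
  have h := integral_rpow_mul_exp_neg_mul_rpow two_pos (by linarith [k.cast_nonneg (α := ℝ)] :
    (-1 : ℝ) < k) hb
  simp only [rpow_natCast, rpow_two] at h
  rw [h, neg_div, rpow_neg hb.le]
  field_simp

theorem integral_pow_mul_erfc_mul {c : ℝ} (hc : 0 < c) (k : ℕ) :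
    ∫ x in Ioi 0, x ^ k * erfc (c * x) =
      2 * c / ((k + 1) * √π) * ∫ x in Ioi 0, x ^ (k + 1) * exp (-c ^ 2 * x ^ 2) := by
  set A := 2 * c / ((k + 1) * √π)
  set g := fun x : ℝ => x ^ (k + 1) * exp (-c ^ 2 * x ^ 2)
  have hgi : IntegrableOn g (Ioi 0) := by
    simpa only [rpow_natCast] using integrableOn_rpow_mul_exp_neg_mul_sq (pow_pos hc 2)
      (s := ((k + 1 : ℕ) : ℝ)) (by linarith [(k + 1).cast_nonneg (α := ℝ)])
  -- `F' = x ^ k erfc (c x) ≥ 0`, so the improper FTC needs no separate integrability argument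
  set F := fun x => x ^ (k + 1) / (k + 1) * erfc (c * x) + A * ∫ t in 0..x, g t
  have hF : ∀ x ∈ Ici (0 : ℝ), HasDerivAt F (x ^ k * erfc (c * x)) x := by
    intro x _
    have herfc := (hasDerivAt_erfc (c * x)).comp x ((hasDerivAt_id x).const_mul c)
    have hg : Continuous g := by fun_prop
    refine ((((hasDerivAt_pow (k + 1) x).div_const (k + 1)).mul herfc).add
      ((hg.integral_hasStrictDerivAt 0 x).hasDerivAt.const_mul A)).congr_deriv ?_
    simp only [Nat.add_sub_cancel, Nat.cast_add, Nat.cast_one, Function.comp_apply, g, A, mul_pow,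
      neg_mul]
    field_simp
    ring
  have hnonneg : ∀ x ∈ Ioi (0 : ℝ), 0 ≤ x ^ k * erfc (c * x) := fun x hx =>
    mul_nonneg (pow_nonneg hx.le _) (erfc_nonneg _)
  have hlim : Tendsto F atTop (𝓝 (A * ∫ x in Ioi 0, g x)) := by
    have := ((tendsto_pow_succ_mul_erfc_mul hc k).div_const (k + 1)).add
      ((intervalIntegral_tendsto_integral_Ioi 0 hgi tendsto_id).const_mul A)
    rw [zero_div, zero_add] at this
    refine this.congr fun x => ?_
    simp only [F, id]
    ring
  rw [integral_Ioi_of_hasDerivAt_of_nonneg' hF hnonneg hlim]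
  simp [F]

theorem integral_pow_mul_erfc_mul_eq_Gamma {c : ℝ} (hc : 0 < c) (k : ℕ) :
    ∫ x in Ioi 0, x ^ k * erfc (c * x) = Gamma ((k + 2) / 2) / ((k + 1) * √π * c ^ (k + 1)) := by
  have hpow : (c ^ 2) ^ ((((k + 1 : ℕ) : ℝ) + 1) / 2) = c ^ (k + 2) := by
    rw [← rpow_natCast c 2, ← rpow_mul hc.le, ← rpow_natCast]
    congr 1
    push_cast
    ring
  rw [integral_pow_mul_erfc_mul hc, integral_pow_mul_exp_neg_mul_sq (pow_pos hc 2), hpow]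
  push_cast
  field_simp
  ring_nf

lemma integral_pow_mul_pinned_density (k : ℕ) :
    ∫ x in Ioi (0 : ℝ), x ^ k * (π * x * erfc (√π * x / 2)) =
      π * (Gamma ((k + 3) / 2) / ((k + 2) * √π * (√π / 2) ^ (k + 2))) := by
  calc ∫ x in Ioi (0 : ℝ), x ^ k * (π * x * erfc (√π * x / 2))
      = π * ∫ x in Ioi (0 : ℝ), x ^ (k + 1) * erfc (√π / 2 * x) := by
        rw [← integral_const_mul]
        refine setIntegral_congr_fun measurableSet_Ioi fun x _ => ?_
        ring_nf
    _ = _ := by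
        rw [integral_pow_mul_erfc_mul_eq_Gamma (by positivity)]
        push_cast
        ring_nf

theorem pinned_a_moments :
    (∫ x in Set.Ioi (0:ℝ), x * (π * x * erfc (Real.sqrt π * x / 2))) = 8 / (3 * π) ∧
    (∫ x in Set.Ioi (0:ℝ), x ^ 2 * (π * x * erfc (Real.sqrt π * x / 2))) = 3 / π := by
  have hπ : √π ≠ 0 := (sqrt_pos.mpr pi_pos).ne'
  have hsqrt4 : √π ^ 4 = π ^ 2 := by rw [show 4 = 2 * 2 from rfl, pow_mul, sq_sqrt pi_pos.le]
  constructor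
  · have h := integral_pow_mul_pinned_density 1
    norm_num at h
    rw [h]
    field_simp
    rw [hsqrt4]
    ring
  · rw [integral_pow_mul_pinned_density 2,
      show ((2 : ℕ) + 3 : ℝ) / 2 = (1 : ℕ) + 1 + 1 / 2 by norm_num, Gamma_nat_add_one_add_half]
    field_simp
    norm_num [Nat.doubleFactorial, div_pow, hsqrt4]
    ring
end

section
/- The function g(x,y) = (2/π)·sin(x)·sin(x+y)/sin(y)³ on the region {(x,y) : 0 < x < π, (π−x)/2 < y < π−x} integrates to 1, i.e., ∫₀^π ∫_{(π−x)/2}^{π−x} (2/π)·sin(x)·sin(x+y)/sin(y)³ dy dx = 1. -/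
/-! Expanding sin (x + y) = sin x cos y + cos x sin y, the inner integrand sin (x + y) / sin³ y has
the elementary primitive -(sin x / (2 sin² y) + cos x cot y). At y = π - x and y = (π - x) / 2 the
half-angle formulas collapse its increment to 1 / (2 sin x), so with the factor (2 / π) sin x the
inner integral equals 1 / π for every x ∈ (0, π), and the outer integral is π · (1 / π) = 1. -/

open Real MeasureTheory

noncomputable def sinAddDivSinCubePrimitive (x y : ℝ) : ℝ :=
  -(sin x / (2 * sin y ^ 2) + cos x * (cos y / sin y))

theorem hasDerivAt_sinAddDivSinCubePrimitive (x : ℝ) {y : ℝ} (hy : sin y ≠ 0) :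
    HasDerivAt (sinAddDivSinCubePrimitive x) (sin (x + y) / sin y ^ 3) y := by
  have hsq : HasDerivAt (fun y => 2 * sin y ^ 2) (2 * (2 * sin y ^ 1 * cos y)) y :=
    ((hasDerivAt_sin y).pow 2).const_mul 2
  have hcot := (hasDerivAt_cos y).div (hasDerivAt_sin y) hy
  refine (((hasDerivAt_const y (sin x)).div hsq (by positivity)).add
    (hcot.const_mul (cos x))).neg.congr_deriv ?_
  rw [sin_add]
  field_simp
  linear_combination 2 * sin y * cos x * sin_sq_add_cos_sq y

theorem integral_sin_add_div_sin_cube (x : ℝ) {a b : ℝ} (ha : 0 < a) (hab : a ≤ b) (hb : b < π) :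
    ∫ y in a..b, sin (x + y) / sin y ^ 3 =
      sinAddDivSinCubePrimitive x b - sinAddDivSinCubePrimitive x a := by
  have hsin : ∀ y ∈ Set.uIcc a b, sin y ≠ 0 := by
    intro y hy
    rw [Set.uIcc_of_le hab] at hy
    exact (sin_pos_of_pos_of_lt_pi (ha.trans_le hy.1) (hy.2.trans_lt hb)).ne'
  refine intervalIntegral.integral_eq_sub_of_hasDerivAt
    (fun y hy => hasDerivAt_sinAddDivSinCubePrimitive x (hsin y hy)) ?_
  exact (ContinuousOn.div (by fun_prop) (by fun_prop) fun y hy => pow_ne_zero 3 (hsin y hy)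
    ).intervalIntegrable

theorem sinAddDivSinCubePrimitive_sub {x : ℝ} (hx₀ : 0 < x) (hx : x < π) :
    sinAddDivSinCubePrimitive x (π - x) - sinAddDivSinCubePrimitive x ((π - x) / 2) =
      1 / (2 * sin x) := by
  have hhalf : (π - x) / 2 = π / 2 - x / 2 := by ring
  have hs : sin (x / 2) ≠ 0 := (sin_pos_of_pos_of_lt_pi (by linarith) (by linarith)).ne'
  have hc : cos (x / 2) ≠ 0 := (cos_pos_of_mem_Ioo ⟨by linarith, by linarith⟩).ne'
  have hsin : sin x = 2 * sin (x / 2) * cos (x / 2) := by rw [← sin_two_mul]; ring_nf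
  have hcos : cos x = 2 * cos (x / 2) ^ 2 - 1 := by rw [← cos_two_mul]; ring_nf
  simp only [sinAddDivSinCubePrimitive, sin_pi_sub, cos_pi_sub, hhalf, sin_pi_div_two_sub,
    cos_pi_div_two_sub]
  rw [hsin, hcos]
  field_simp
  linear_combination (8 * cos (x / 2) ^ 2) * sin_sq_add_cos_sq (x / 2)

theorem integral_pinned_angle_density_inner {x : ℝ} (hx₀ : 0 < x) (hx : x < π) :
    ∫ y in Set.Ioo ((π - x) / 2) (π - x), (2 / π) * sin x * sin (x + y) / sin y ^ 3 = 1 / π := by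
  have hsin : sin x ≠ 0 := (sin_pos_of_pos_of_lt_pi hx₀ hx).ne'
  simp_rw [mul_div_assoc]
  rw [integral_const_mul, ← integral_Ioc_eq_integral_Ioo,
    ← intervalIntegral.integral_of_le (by linarith),
    integral_sin_add_div_sin_cube x (by linarith) (by linarith) (by linarith),
    sinAddDivSinCubePrimitive_sub hx₀ hx]
  field_simp

theorem pinned_angle_joint_density :
    ∫ x in Set.Ioo (0:ℝ) π, ∫ y in Set.Ioo ((π - x) / 2) (π - x),
      (2 / π) * Real.sin x * Real.sin (x + y) / Real.sin y ^ 3 = 1 := by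
  rw [setIntegral_congr_fun measurableSet_Ioo
    (fun x hx => integral_pinned_angle_density_inner hx.1 hx.2), setIntegral_const,
    Real.volume_real_Ioo_of_le pi_pos.le, sub_zero, smul_eq_mul]
  field_simp
end

section
/- With joint density g(x,y) = (2/π)·sin(x)·sin(x+y)/sin(y)³ on {0 < x < π, (π−x)/2 < y < π−x}, the marginal in x is uniform: for each 0 < x < π, ∫_{(π−x)/2}^{π−x} (2/π)·sin(x)·sin(x+y)/sin(y)³ dy = 1/π. -/
open Real MeasureTheory

/-!
Write `sin (x + y) / sin y ^ 3 = (sin x * cot y + cos x) / sin y ^ 2` and substitute `c = cot y`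
(`dc = -dy / sin y ^ 2`): the integral becomes that of the linear function `sin x * c + cos x`
between `cot (π - x) = -cot x` and `cot ((π - x) / 2)`. Since `cos x = -sin x * cot (π - x)`,
its value is `sin x / 2 * (cot ((π - x) / 2) - cot (π - x)) ^ 2`, and the half-angle identity
`cot θ - cot (2 * θ) = 1 / sin (2 * θ)` turns this into `1 / (2 * sin x)`.
-/

theorem Real.hasDerivAt_cot {y : ℝ} (h : sin y ≠ 0) : HasDerivAt cot (-1 / sin y ^ 2) y := by
  have hquot := (hasDerivAt_cos y).div (hasDerivAt_sin y) h
  rw [show cos / sin = cot from funext fun _ => (cot_eq_cos_div_sin _).symm] at hquot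
  refine hquot.congr_deriv ?_
  congr 1
  linear_combination -(sin_sq_add_cos_sq y)

theorem Real.cot_sub_cot_two_mul {θ : ℝ} (h : sin (2 * θ) ≠ 0) :
    cot θ - cot (2 * θ) = 1 / sin (2 * θ) := by
  rw [sin_two_mul] at h
  have hsin : sin θ ≠ 0 := fun h0 => h (by rw [h0]; ring)
  have hcos : cos θ ≠ 0 := fun h0 => h (by rw [h0]; ring)
  rw [cot_eq_cos_div_sin, cot_eq_cos_div_sin, sin_two_mul, cos_two_mul]
  field_simp
  ring

theorem integral_sin_add_div_sin_pow_three (x : ℝ) {a b : ℝ} (ha : 0 < a) (hab : a ≤ b)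
    (hb : b < π) :
    ∫ y in a..b, sin (x + y) / sin y ^ 3
      = sin x / 2 * (cot a ^ 2 - cot b ^ 2) + cos x * (cot a - cot b) := by
  have hsin : ∀ y ∈ Set.uIcc a b, sin y ≠ 0 := by
    intro y hy
    rw [Set.uIcc_of_le hab] at hy
    exact (sin_pos_of_pos_of_lt_pi (ha.trans_le hy.1) (hy.2.trans_lt hb)).ne'
  have hintegrand : Set.EqOn (fun y => sin (x + y) / sin y ^ 3)
      (fun y => -(((fun c => sin x * c + cos x) ∘ cot) y * (-1 / sin y ^ 2))) (Set.uIcc a b) := by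
    intro y hy
    have := hsin y hy
    simp only [Function.comp_apply, cot_eq_cos_div_sin, sin_add]
    field_simp
  have hsubst := intervalIntegral.integral_comp_mul_deriv (g := fun c => sin x * c + cos x)
    (fun y hy => hasDerivAt_cot (hsin y hy))
    (continuousOn_const.div (continuous_sin.continuousOn.pow 2)
      fun y hy => pow_ne_zero 2 (hsin y hy))
    (by fun_prop)
  rw [intervalIntegral.integral_congr hintegrand, intervalIntegral.integral_neg, hsubst,
    intervalIntegral.integral_add (intervalIntegral.intervalIntegrable_id.const_mul _)
      intervalIntegrable_const,
    intervalIntegral.integral_const_mul, integral_id, intervalIntegral.integral_const, smul_eq_mul]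
  ring

theorem pinned_alpha_uniform (x : ℝ) (hx0 : 0 < x) (hxπ : x < π) :
    ∫ y in Set.Ioo ((π - x) / 2) (π - x),
      (2 / π) * Real.sin x * Real.sin (x + y) / Real.sin y ^ 3 = 1 / π := by
  have hsin : sin x ≠ 0 := (sin_pos_of_pos_of_lt_pi hx0 hxπ).ne'
  set A := cot ((π - x) / 2)
  set B := cot (π - x)
  have hcos : cos x = -(sin x * B) := by
    simp only [B, cot_eq_cos_div_sin, sin_pi_sub, cos_pi_sub]
    field_simp
  have hdiff : sin x * (A - B) = 1 := by
    have hdouble : 2 * ((π - x) / 2) = π - x := by ring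
    have := cot_sub_cot_two_mul (θ := (π - x) / 2) (by rwa [hdouble, sin_pi_sub])
    rw [hdouble, sin_pi_sub] at this
    rw [this]
    field_simp
  rw [← integral_Ioc_eq_integral_Ioo, ← intervalIntegral.integral_of_le (by linarith)]
  simp only [mul_div_assoc, intervalIntegral.integral_const_mul]
  rw [integral_sin_add_div_sin_pow_three x (by linarith) (by linarith) (by linarith), hcos]
  linear_combination (sin x * (A - B) + 1) / π * hdiff
end

section
/- The function h(x) = (4/π)·cos(x)² for 0 < x < π/2 (and 0 for π/2 < x < π) is a probability density, and its mean is π/4 − 1/π and mean square is −1/2 + π²/12. -/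
/-!
Write `cos² x = (1 + cos 2x) / 2`; then `x ↦ xᵏ cos² x` (`k = 0, 1, 2`) has an elementary
antiderivative (integrate by parts against `cos 2x`), and evaluating it at `0` and `π / 2`, where
`sin 2x = 0` and `cos 2x = ± 1`, gives `∫ cos² = π / 4`, `∫ x cos² x = π² / 16 - 1 / 4` and
`∫ x² cos² x = π³ / 48 - π / 8`. Multiplying by `4 / π` gives the three claims.
-/

open Real MeasureTheory

lemma hasDerivAt_sin_two_mul (x : ℝ) :
    HasDerivAt (fun x => sin (2 * x)) (cos (2 * x) * 2) x :=
  (hasDerivAt_sin (2 * x)).comp x ((hasDerivAt_id x).const_mul 2 |>.congr_deriv (mul_one 2))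

lemma hasDerivAt_cos_two_mul (x : ℝ) :
    HasDerivAt (fun x => cos (2 * x)) (-sin (2 * x) * 2) x :=
  (hasDerivAt_cos (2 * x)).comp x ((hasDerivAt_id x).const_mul 2 |>.congr_deriv (mul_one 2))

lemma hasDerivAt_antideriv_mul_cos_sq (x : ℝ) :
    HasDerivAt (fun x => x ^ 2 / 4 + x * sin (2 * x) / 4 + cos (2 * x) / 8)
      (x * cos x ^ 2) x := by
  have := (((hasDerivAt_pow 2 x).div_const 4).add
    (((hasDerivAt_id x).mul (hasDerivAt_sin_two_mul x)).div_const 4)).add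
    ((hasDerivAt_cos_two_mul x).div_const 8)
  refine this.congr_deriv ?_
  simp only [id_eq, cos_two_mul]
  ring

lemma hasDerivAt_antideriv_sq_mul_cos_sq (x : ℝ) :
    HasDerivAt (fun x => x ^ 3 / 6 + x ^ 2 * sin (2 * x) / 4 + x * cos (2 * x) / 4
      - sin (2 * x) / 8) (x ^ 2 * cos x ^ 2) x := by
  have := ((((hasDerivAt_pow 3 x).div_const 6).add
    (((hasDerivAt_pow 2 x).mul (hasDerivAt_sin_two_mul x)).div_const 4)).add
    (((hasDerivAt_id x).mul (hasDerivAt_cos_two_mul x)).div_const 4)).sub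
    ((hasDerivAt_sin_two_mul x).div_const 8)
  refine this.congr_deriv ?_
  simp only [id_eq, cos_two_mul]
  ring

lemma integral_cos_sq_zero_pi_div_two : ∫ x in (0 : ℝ)..π / 2, cos x ^ 2 = π / 4 := by
  rw [integral_cos_sq, cos_pi_div_two]
  simp only [zero_mul, cos_zero, sin_zero]
  ring

lemma integral_mul_cos_sq_zero_pi_div_two :
    ∫ x in (0 : ℝ)..π / 2, x * cos x ^ 2 = π ^ 2 / 16 - 1 / 4 := by
  rw [intervalIntegral.integral_eq_sub_of_hasDerivAt
    (fun x _ => hasDerivAt_antideriv_mul_cos_sq x) (by apply Continuous.intervalIntegrable; fun_prop)]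
  simp only [mul_div_cancel₀ π two_ne_zero, mul_zero, sin_pi, cos_pi, sin_zero, cos_zero]
  ring

lemma integral_sq_mul_cos_sq_zero_pi_div_two :
    ∫ x in (0 : ℝ)..π / 2, x ^ 2 * cos x ^ 2 = π ^ 3 / 48 - π / 8 := by
  rw [intervalIntegral.integral_eq_sub_of_hasDerivAt
    (fun x _ => hasDerivAt_antideriv_sq_mul_cos_sq x)
    (by apply Continuous.intervalIntegrable; fun_prop)]
  simp only [mul_div_cancel₀ π two_ne_zero, mul_zero, sin_pi, cos_pi, sin_zero, cos_zero]
  ring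

theorem pinned_gamma_density_and_moments :
    (∫ x in Set.Ioo (0:ℝ) (π / 2), (4 / π) * Real.cos x ^ 2) = 1 ∧
    (∫ x in Set.Ioo (0:ℝ) (π / 2), x * ((4 / π) * Real.cos x ^ 2)) = π / 4 - 1 / π ∧
    (∫ x in Set.Ioo (0:ℝ) (π / 2), x ^ 2 * ((4 / π) * Real.cos x ^ 2)) = -1 / 2 + π ^ 2 / 12 := by
  have hIoo (f : ℝ → ℝ) : ∫ x in Set.Ioo 0 (π / 2), f x = ∫ x in (0 : ℝ)..π / 2, f x := by
    rw [intervalIntegral.integral_of_le (by positivity), integral_Ioc_eq_integral_Ioo]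
  simp only [hIoo, mul_left_comm _ (4 / π), intervalIntegral.integral_const_mul,
    integral_cos_sq_zero_pi_div_two, integral_mul_cos_sq_zero_pi_div_two,
    integral_sq_mul_cos_sq_zero_pi_div_two]
  refine ⟨?_, ?_, ?_⟩ <;> field_simp <;> ring
end

section
/- If γ has density (4/π)·cos(x)² on (0, π/2), then P(γ > π/2) = 0; combined with P(α > π/2) = 1/2 for α Uniform[0,π] and P(β > π/2) = 1/4 for β with density (1/sin(x)² + (π−x)cos(x)/sin(x)³)/π on (π/2, π), the probability that a pinned Poissonian triangle is obtuse equals 3/4. -/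
/-!
Substituting `x = π - u` turns `π` times the density of `β` on `(π/2, π)` into
`(sin u - u cos u) / sin³ u` on `(0, π/2)`, which has the elementary primitive
`(u - sin u cos u) / (2 sin² u)`. From `u cos u ≤ sin u` this primitive lies between `0` and `u/2`,
so it is continuous at `u = 0`, where `0 / 0 = 0` gives it the value `0`. It equals `π/4` at
`π/2`, the integrand is nonnegative, hence integrable, and the fundamental theorem of calculus
gives `P(β > π/2) = 1/4`.
-/

open Real MeasureTheory Set

namespace PinnedObtuse

/-- `π` times the density of `β` at `π - u`. -/
noncomputable def kernel (u : ℝ) : ℝ := (sin u - u * cos u) / sin u ^ 3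

noncomputable def kernelPrimitive (u : ℝ) : ℝ := (u - sin u * cos u) / (2 * sin u ^ 2)

lemma kernel_pi_sub (x : ℝ) :
    kernel (π - x) = 1 / sin x ^ 2 + (π - x) * cos x / sin x ^ 3 := by
  rw [kernel, sin_pi_sub, cos_pi_sub]
  rcases eq_or_ne (sin x) 0 with hs | hs
  · simp [hs]
  · field_simp
    ring

lemma mul_cos_le_sin {u : ℝ} (h0 : 0 ≤ u) (hπ : u ≤ π) : u * cos u ≤ sin u := by
  have hsin : 0 ≤ sin u := sin_nonneg_of_nonneg_of_le_pi h0 hπ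
  rcases lt_or_ge u (π / 2) with hlt | hge
  · have hcos : 0 < cos u := cos_pos_of_mem_Ioo ⟨by linarith [pi_pos], hlt⟩
    have htan := le_tan h0 hlt
    rwa [tan_eq_sin_div_cos, le_div_iff₀ hcos] at htan
  · nlinarith [cos_nonpos_of_pi_div_two_le_of_le hge (by linarith)]

lemma kernel_nonneg {u : ℝ} (h0 : 0 ≤ u) (hπ : u ≤ π) : 0 ≤ kernel u :=
  div_nonneg (sub_nonneg.2 (mul_cos_le_sin h0 hπ))
    (pow_nonneg (sin_nonneg_of_nonneg_of_le_pi h0 hπ) 3)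

lemma hasDerivAt_kernelPrimitive {u : ℝ} (hu : sin u ≠ 0) :
    HasDerivAt kernelPrimitive (kernel u) u := by
  have hnum : HasDerivAt (fun u => u - sin u * cos u)
      (1 - (cos u * cos u + sin u * -sin u)) u :=
    (hasDerivAt_id u).sub ((hasDerivAt_sin u).mul (hasDerivAt_cos u))
  have hden : HasDerivAt (fun u => 2 * sin u ^ 2) (2 * (2 * sin u ^ 1 * cos u)) u :=
    ((hasDerivAt_sin u).pow 2).const_mul 2
  refine (hnum.div hden (by positivity)).congr_deriv ?_
  rw [kernel]
  field_simp
  linear_combination sin u * sin_sq_add_cos_sq u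

lemma kernelPrimitive_nonneg {u : ℝ} (h0 : 0 ≤ u) : 0 ≤ kernelPrimitive u := by
  have h2u : sin u * cos u ≤ u := by
    have := sin_le (by linarith : 0 ≤ 2 * u)
    rw [sin_two_mul] at this
    linarith
  exact div_nonneg (sub_nonneg.2 h2u) (by positivity)

lemma kernelPrimitive_le_half {u : ℝ} (h0 : 0 ≤ u) (hπ : u ≤ π / 2) :
    kernelPrimitive u ≤ u / 2 := by
  have hcos : 0 ≤ cos u := cos_nonneg_of_mem_Icc ⟨by linarith [pi_pos], hπ⟩
  have hsc : u * cos u * cos u ≤ sin u * cos u :=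
    mul_le_mul_of_nonneg_right (mul_cos_le_sin h0 (by linarith [pi_pos])) hcos
  refine div_le_of_le_mul₀ (by positivity) (by linarith) ?_
  nlinarith [sin_sq_add_cos_sq u]

lemma kernelPrimitive_zero : kernelPrimitive 0 = 0 := by
  simp [kernelPrimitive]

lemma kernelPrimitive_pi_div_two : kernelPrimitive (π / 2) = π / 4 := by
  simp only [kernelPrimitive, sin_pi_div_two, cos_pi_div_two, mul_zero, sub_zero, one_pow, mul_one]
  ring

lemma continuousOn_kernelPrimitive : ContinuousOn kernelPrimitive (Icc 0 (π / 2)) := by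
  intro u hu
  rcases hu.1.eq_or_lt with rfl | hpos
  · have hhalf : Filter.Tendsto (fun u : ℝ => u / 2) (nhdsWithin 0 (Icc 0 (π / 2))) (nhds 0) := by
      simpa using (((continuous_id (X := ℝ)).div_const 2).tendsto 0).mono_left nhdsWithin_le_nhds
    rw [ContinuousWithinAt, kernelPrimitive_zero]
    refine tendsto_of_tendsto_of_tendsto_of_le_of_le' tendsto_const_nhds hhalf ?_ ?_ <;>
      filter_upwards [self_mem_nhdsWithin] with v hv
    exacts [kernelPrimitive_nonneg hv.1, kernelPrimitive_le_half hv.1 hv.2]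
  · have hsin : sin u ≠ 0 := (sin_pos_of_pos_of_lt_pi hpos (by linarith [hu.2, pi_pos])).ne'
    exact (hasDerivAt_kernelPrimitive hsin).continuousAt.continuousWithinAt

lemma integral_kernel : ∫ u in (0)..π / 2, kernel u = π / 4 := by
  have hπ : (0 : ℝ) ≤ π / 2 := by positivity
  have hderiv : ∀ u ∈ Ioo 0 (π / 2), HasDerivAt kernelPrimitive (kernel u) u := fun u hu =>
    hasDerivAt_kernelPrimitive (sin_pos_of_pos_of_lt_pi hu.1 (by linarith [hu.2, pi_pos])).ne'
  have hint : IntervalIntegrable kernel volume 0 (π / 2) :=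
    (intervalIntegrable_iff_integrableOn_Ioc_of_le hπ).2 <|
      intervalIntegral.integrableOn_deriv_of_nonneg continuousOn_kernelPrimitive hderiv
        fun u hu => kernel_nonneg hu.1.le (by linarith [hu.2, pi_pos])
  rw [intervalIntegral.integral_eq_sub_of_hasDerivAt_of_le hπ continuousOn_kernelPrimitive
    hderiv hint, kernelPrimitive_pi_div_two, kernelPrimitive_zero, sub_zero]

end PinnedObtuse

theorem pinned_obtuse_probability :
    (∫ x in Set.Ioi (π / 2), (if x < π / 2 then (4 / π) * Real.cos x ^ 2 else 0)) = 0 ∧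
    (∫ x in Set.Ioo (π / 2) π, (1 / π : ℝ)) = 1 / 2 ∧
    (∫ x in Set.Ioo (π / 2) π,
      (1 / Real.sin x ^ 2 + (π - x) * Real.cos x / Real.sin x ^ 3) / π) = 1 / 4 ∧
    (0 : ℝ) + 1 / 2 + 1 / 4 = 3 / 4 := by
  have hπ : π / 2 ≤ π := by linarith [pi_pos]
  refine ⟨?_, ?_, ?_, by norm_num⟩
  · exact setIntegral_eq_zero_of_forall_eq_zero fun _ hx => if_neg (not_lt.2 (le_of_lt hx))
  · rw [setIntegral_const, volume_real_Ioo_of_le hπ, smul_eq_mul]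
    field_simp
    ring
  · have hβ : ∫ x in (π / 2)..π, PinnedObtuse.kernel (π - x) = π / 4 := by
      rw [intervalIntegral.integral_comp_sub_left, sub_self, sub_half, PinnedObtuse.integral_kernel]
    simp_rw [PinnedObtuse.kernel_pi_sub, intervalIntegral.integral_of_le hπ,
      integral_Ioc_eq_integral_Ioo] at hβ
    rw [integral_div, hβ]
    field_simp
end

section
/- The function p(x) = (2x/π)·arccos(x/2) for 0 < x < 2 is a probability density with mean 32/(9π) and mean square 3/2. -/
/-!
Substituting `x = 2t` reduces the `n`-th moment of the density to `∫₀¹ tⁿ⁺¹ arccos t`.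
Integrating by parts against `arccos' t = -1 / √(1 - t²)` (the boundary term vanishes since
`arccos 1 = 0`) leaves `∫₀¹ tⁿ⁺² / √(1 - t²)`, which has an elementary antiderivative in `arcsin t`
and `√(1 - t²)`.
-/

open Real MeasureTheory

lemma hasDerivAt_sqrt_one_sub_sq {t : ℝ} (ht : t ^ 2 ≠ 1) :
    HasDerivAt (fun t => √(1 - t ^ 2)) (-t / √(1 - t ^ 2)) t := by
  refine (((hasDerivAt_pow 2 t).const_sub 1).sqrt (sub_ne_zero.2 ht.symm)).congr_deriv ?_
  rw [Nat.cast_ofNat, pow_one, ← mul_neg, mul_div_mul_left _ _ two_ne_zero]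

noncomputable def arccosMoment (n : ℕ) : ℝ := ∫ t in (0 : ℝ)..1, t ^ n * arccos t

lemma arccosMoment_eq_sub {n : ℕ} {G : ℝ → ℝ} (hG : ContinuousOn G (Set.Icc 0 1))
    (hG' : ∀ t ∈ Set.Ioo (0 : ℝ) 1, HasDerivAt G (t ^ (n + 1) / ((n + 1) * √(1 - t ^ 2))) t) :
    arccosMoment n = G 1 - G 0 := by
  have hF : ∀ t ∈ Set.Ioo (0 : ℝ) 1,
      HasDerivAt (fun t => t ^ (n + 1) / (n + 1) * arccos t + G t) (t ^ n * arccos t) t := by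
    intro t ht
    refine ((((hasDerivAt_pow (n + 1) t).div_const (n + 1)).mul
      (hasDerivAt_arccos (by linarith [ht.1]) ht.2.ne)).add (hG' t ht)).congr_deriv ?_
    field_simp
    push_cast
    ring
  have hcont : ContinuousOn (fun t => t ^ (n + 1) / (n + 1) * arccos t + G t) (Set.Icc 0 1) :=
    (by fun_prop : Continuous fun t : ℝ => t ^ (n + 1) / (n + 1) * arccos t).continuousOn.add hG
  rw [arccosMoment, intervalIntegral.integral_eq_sub_of_hasDerivAt_of_le zero_le_one hcont hF
    ((by fun_prop : Continuous fun t : ℝ => t ^ n * arccos t).intervalIntegrable 0 1)]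
  simp [arccos_one]

lemma arccosMoment_one : arccosMoment 1 = π / 8 := by
  rw [arccosMoment_eq_sub (G := fun t => (arcsin t - t * √(1 - t ^ 2)) / 4)]
  · norm_num
    ring
  · fun_prop
  intro t ht
  have hlt : t ^ 2 < 1 := by nlinarith [ht.1, ht.2]
  have hs : √(1 - t ^ 2) ^ 2 = 1 - t ^ 2 := sq_sqrt (by linarith)
  refine (((hasDerivAt_arcsin (by linarith [ht.1]) ht.2.ne).sub
    ((hasDerivAt_id t).mul (hasDerivAt_sqrt_one_sub_sq hlt.ne))).div_const 4).congr_deriv ?_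
  field_simp
  simp only [id, hs]
  push_cast
  ring

lemma arccosMoment_two : arccosMoment 2 = 2 / 9 := by
  rw [arccosMoment_eq_sub (G := fun t => -((2 + t ^ 2) * √(1 - t ^ 2) / 9))]
  · norm_num
  · fun_prop
  intro t ht
  have hlt : t ^ 2 < 1 := by nlinarith [ht.1, ht.2]
  have hs : √(1 - t ^ 2) ^ 2 = 1 - t ^ 2 := sq_sqrt (by linarith)
  refine ((((hasDerivAt_pow 2 t).const_add 2).mul
    (hasDerivAt_sqrt_one_sub_sq hlt.ne)).div_const 9).neg.congr_deriv ?_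
  field_simp
  simp only [hs]
  push_cast
  ring

lemma arccosMoment_three : arccosMoment 3 = 3 * π / 64 := by
  rw [arccosMoment_eq_sub
    (G := fun t => (3 * arcsin t - (3 * t + 2 * t ^ 3) * √(1 - t ^ 2)) / 32)]
  · norm_num
    ring
  · fun_prop
  intro t ht
  have hlt : t ^ 2 < 1 := by nlinarith [ht.1, ht.2]
  have hs : √(1 - t ^ 2) ^ 2 = 1 - t ^ 2 := sq_sqrt (by linarith)
  refine ((((hasDerivAt_arcsin (by linarith [ht.1]) ht.2.ne).const_mul 3).sub
    ((((hasDerivAt_id t).const_mul 3).add ((hasDerivAt_pow 3 t).const_mul 2)).mul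
      (hasDerivAt_sqrt_one_sub_sq hlt.ne))).div_const 32).congr_deriv ?_
  field_simp
  simp only [id, Pi.add_apply, hs]
  push_cast
  ring

lemma integral_pow_mul_arccos_div_two (n : ℕ) :
    ∫ x in (0 : ℝ)..2, x ^ n * arccos (x / 2) = 2 ^ (n + 1) * arccosMoment n := by
  have h := intervalIntegral.smul_integral_comp_mul_left (fun x : ℝ => x ^ n * arccos (x / 2)) 2
    (a := 0) (b := 1)
  simp only [mul_pow, mul_div_cancel_left₀ _ (two_ne_zero' ℝ), mul_assoc,
    intervalIntegral.integral_const_mul, smul_eq_mul, mul_zero, mul_one] at h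
  rw [← h, arccosMoment, pow_succ]
  ring

lemma integral_Ioo_pow_mul_density (n : ℕ) :
    ∫ x in Set.Ioo (0 : ℝ) 2, x ^ n * ((2 * x / π) * arccos (x / 2))
      = 2 ^ (n + 3) / π * arccosMoment (n + 1) := by
  rw [← integral_Ioc_eq_integral_Ioo, ← intervalIntegral.integral_of_le zero_le_two]
  have h (x : ℝ) :
      x ^ n * ((2 * x / π) * arccos (x / 2)) = 2 / π * (x ^ (n + 1) * arccos (x / 2)) := by
    ring
  simp only [h, intervalIntegral.integral_const_mul, integral_pow_mul_arccos_div_two]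
  ring

theorem pinned_a_div_b_density :
    (∫ x in Set.Ioo (0:ℝ) 2, (2 * x / π) * Real.arccos (x / 2)) = 1 ∧
    (∫ x in Set.Ioo (0:ℝ) 2, x * ((2 * x / π) * Real.arccos (x / 2))) = 32 / (9 * π) ∧
    (∫ x in Set.Ioo (0:ℝ) 2, x ^ 2 * ((2 * x / π) * Real.arccos (x / 2))) = 3 / 2 := by
  have h0 := integral_Ioo_pow_mul_density 0
  have h1 := integral_Ioo_pow_mul_density 1
  have h2 := integral_Ioo_pow_mul_density 2
  simp only [pow_zero, one_mul, pow_one] at h0 h1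
  norm_num only [arccosMoment_one, arccosMoment_two, arccosMoment_three] at h0 h1 h2
  refine ⟨h0.trans ?_, h1.trans ?_, h2.trans ?_⟩ <;> field_simp <;> norm_num
end

section
/- The function q(x) = 1/x³ − (2/(πx³))·arcsin(1/(2x)) for x > 1/2 is a probability density with mean 4/π, and its second moment ∫_{1/2}^∞ x²·q(x) dx diverges to infinity. -/
/-!
Since `arcsin = π / 2 - arccos`, the density is `q x = (2 / π) · arccos (1 / (2x)) / x³`.
With `(arccos (1 / (2x)))' = 1 / (x √(4x² - 1))` and `(√(4x² - 1))' = 4x / √(4x² - 1)`,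
integration by parts yields explicit primitives of `q` and of `x q` that vanish at `1 / 2` and
tend to `1` and `4 / π` at infinity. For `x > 1` we have `arccos (1 / (2x)) ≥ π / 3`, so
`x² q x ≥ 2 / (3x)`, which is not integrable at infinity.
-/

open Real MeasureTheory Set Filter Topology

noncomputable def pinnedRatioDensity (x : ℝ) : ℝ :=
  1 / x ^ 3 - (2 / (π * x ^ 3)) * arcsin (1 / (2 * x))

noncomputable def pinnedRatioCDF (x : ℝ) : ℝ :=
  (arccos (1 / (2 * x)) * (2 - 1 / x ^ 2) + √(4 * x ^ 2 - 1) / (2 * x ^ 2)) / π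

noncomputable def pinnedRatioPartialMean (x : ℝ) : ℝ :=
  2 / π * ((√(4 * x ^ 2 - 1) - arccos (1 / (2 * x))) / x)

lemma pinnedRatioDensity_eq_arccos (x : ℝ) :
    pinnedRatioDensity x = 2 / π * (arccos (1 / (2 * x)) / x ^ 3) := by
  rw [pinnedRatioDensity, arccos_eq_pi_div_two_sub_arcsin]
  field_simp [pi_ne_zero]

lemma pinnedRatioDensity_nonneg {x : ℝ} (hx : 0 < x) : 0 ≤ pinnedRatioDensity x := by
  rw [pinnedRatioDensity_eq_arccos]
  have := arccos_nonneg (1 / (2 * x))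
  positivity

section Derivatives

variable {x : ℝ}

lemma sqrt_one_sub_one_div_two_mul_sq (hx : 1 / 2 < x) :
    √(1 - (1 / (2 * x)) ^ 2) = √(4 * x ^ 2 - 1) / (2 * x) := by
  have h : 1 - (1 / (2 * x)) ^ 2 = (4 * x ^ 2 - 1) / (2 * x) ^ 2 := by
    field_simp
    ring
  rw [h, sqrt_div (by nlinarith), sqrt_sq (by linarith)]

lemma hasDerivAt_arccos_one_div_two_mul (hx : 1 / 2 < x) :
    HasDerivAt (fun y => arccos (1 / (2 * y))) (1 / (x * √(4 * x ^ 2 - 1))) x := by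
  have hpos : 0 < 1 / (2 * x) := by positivity
  have hlt : 1 / (2 * x) < 1 := by rw [div_lt_one (by positivity)]; linarith
  have hinner : HasDerivAt (fun y : ℝ => 1 / (2 * y)) (-2 / (2 * x) ^ 2) x := by
    simp only [one_div]
    exact (((hasDerivAt_id x).const_mul 2).inv (by positivity)).congr_deriv (by simp)
  refine ((hasDerivAt_arccos (by linarith) hlt.ne).comp x hinner).congr_deriv ?_
  rw [sqrt_one_sub_one_div_two_mul_sq hx]
  field_simp

lemma hasDerivAt_sqrt_four_mul_sq_sub_one (hx : 1 / 2 < x) :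
    HasDerivAt (fun y => √(4 * y ^ 2 - 1)) (4 * x / √(4 * x ^ 2 - 1)) x := by
  refine ((((hasDerivAt_pow 2 x).const_mul 4).sub_const 1).sqrt (by nlinarith)).congr_deriv ?_
  field_simp
  ring

lemma hasDerivAt_pinnedRatioCDF (hx : 1 / 2 < x) :
    HasDerivAt pinnedRatioCDF (pinnedRatioDensity x) x := by
  have hinv : HasDerivAt (fun y : ℝ => 1 / y ^ 2) (-2 / x ^ 3) x := by
    simp only [one_div]
    refine ((hasDerivAt_pow 2 x).inv (by positivity)).congr_deriv ?_
    field_simp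
    ring
  have h := (((hasDerivAt_arccos_one_div_two_mul hx).mul (hinv.const_sub 2)).add
    ((hasDerivAt_sqrt_four_mul_sq_sub_one hx).div ((hasDerivAt_pow 2 x).const_mul 2)
      (by positivity))).div_const π
  refine h.congr_deriv ?_
  have hS : 0 < √(4 * x ^ 2 - 1) := sqrt_pos.2 (by nlinarith)
  have hS2 : √(4 * x ^ 2 - 1) ^ 2 = 4 * x ^ 2 - 1 := sq_sqrt (by nlinarith)
  rw [pinnedRatioDensity_eq_arccos]
  set S := √(4 * x ^ 2 - 1)
  field_simp
  linear_combination (-2 * x) * hS2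

lemma hasDerivAt_pinnedRatioPartialMean (hx : 1 / 2 < x) :
    HasDerivAt pinnedRatioPartialMean (x * pinnedRatioDensity x) x := by
  have h := (((hasDerivAt_sqrt_four_mul_sq_sub_one hx).sub
    (hasDerivAt_arccos_one_div_two_mul hx)).div (hasDerivAt_id x) (by positivity)).const_mul (2 / π)
  refine h.congr_deriv ?_
  have hS : 0 < √(4 * x ^ 2 - 1) := sqrt_pos.2 (by nlinarith)
  have hS2 : √(4 * x ^ 2 - 1) ^ 2 = 4 * x ^ 2 - 1 := sq_sqrt (by nlinarith)
  rw [pinnedRatioDensity_eq_arccos]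
  simp only [Pi.sub_apply, id_eq]
  set S := √(4 * x ^ 2 - 1)
  field_simp
  linear_combination -hS2

end Derivatives

lemma tendsto_arccos_one_div_two_mul_atTop :
    Tendsto (fun x : ℝ => arccos (1 / (2 * x))) atTop (𝓝 (π / 2)) := by
  have h : Tendsto (fun x : ℝ => 1 / (2 * x)) atTop (𝓝 0) :=
    tendsto_const_nhds.div_atTop (tendsto_id.const_mul_atTop two_pos)
  simpa [Function.comp_def] using (continuous_arccos.tendsto 0).comp h

lemma tendsto_sqrt_four_mul_sq_sub_one_div_atTop :
    Tendsto (fun x : ℝ => √(4 * x ^ 2 - 1) / x) atTop (𝓝 2) := by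
  have h : Tendsto (fun x : ℝ => √(4 - 1 / x ^ 2)) atTop (𝓝 √(4 - 0)) :=
    ((tendsto_const_nhds.div_atTop (tendsto_pow_atTop two_ne_zero)).const_sub 4).sqrt
  rw [show √(4 - 0 : ℝ) = 2 by rw [sub_zero, show (4 : ℝ) = 2 ^ 2 by norm_num, sqrt_sq zero_le_two]]
    at h
  refine h.congr' ?_
  filter_upwards [eventually_gt_atTop 0] with x hx
  rw [show 4 - 1 / x ^ 2 = (4 * x ^ 2 - 1) / x ^ 2 by field_simp, sqrt_div' _ (sq_nonneg x),
    sqrt_sq hx.le]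

lemma tendsto_pinnedRatioCDF_atTop : Tendsto pinnedRatioCDF atTop (𝓝 1) := by
  have hinv : Tendsto (fun y : ℝ => 1 / y) atTop (𝓝 0) := tendsto_const_nhds.div_atTop tendsto_id
  have h := ((tendsto_arccos_one_div_two_mul_atTop.mul ((hinv.pow 2).const_sub 2)).add
    (tendsto_sqrt_four_mul_sq_sub_one_div_atTop.mul (hinv.div_const 2))).div_const π
  convert h using 2 with y
  · rw [pinnedRatioCDF]
    field_simp
  · field_simp [pi_ne_zero]
    ring

lemma tendsto_pinnedRatioPartialMean_atTop :
    Tendsto pinnedRatioPartialMean atTop (𝓝 (4 / π)) := by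
  have hinv : Tendsto (fun y : ℝ => 1 / y) atTop (𝓝 0) := tendsto_const_nhds.div_atTop tendsto_id
  have h := (tendsto_sqrt_four_mul_sq_sub_one_div_atTop.sub
    (tendsto_arccos_one_div_two_mul_atTop.mul hinv)).const_mul (2 / π)
  convert h using 2 with y
  · rw [pinnedRatioPartialMean]
    ring
  · ring

lemma integral_pinnedRatioDensity : ∫ x in Ioi (1 / 2 : ℝ), pinnedRatioDensity x = 1 := by
  rw [integral_Ioi_of_hasDerivAt_of_nonneg
    (by unfold pinnedRatioCDF; fun_prop (disch := norm_num))
    (fun x hx => hasDerivAt_pinnedRatioCDF hx)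
    (fun x hx => pinnedRatioDensity_nonneg (by linarith [hx.out])) tendsto_pinnedRatioCDF_atTop]
  norm_num [pinnedRatioCDF]

lemma integral_mul_pinnedRatioDensity :
    ∫ x in Ioi (1 / 2 : ℝ), x * pinnedRatioDensity x = 4 / π := by
  rw [integral_Ioi_of_hasDerivAt_of_nonneg
    (ContinuousAt.continuousWithinAt (by unfold pinnedRatioPartialMean; fun_prop (disch := norm_num)))
    (fun x hx => hasDerivAt_pinnedRatioPartialMean hx)
    (fun x hx => mul_nonneg (by linarith [hx.out]) (pinnedRatioDensity_nonneg (by linarith [hx.out])))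
    tendsto_pinnedRatioPartialMean_atTop]
  norm_num [pinnedRatioPartialMean]

lemma lintegral_ofReal_Ioi_eq_top_of_inv_le {f : ℝ → ℝ} {a c : ℝ} (ha : 0 ≤ a) (hc : 0 < c)
    (hf : ∀ x ∈ Ioi a, c * x⁻¹ ≤ f x) : ∫⁻ x in Ioi a, ENNReal.ofReal (f x) = ⊤ := by
  have hinv : ∫⁻ x in Ioi a, ENNReal.ofReal x⁻¹ = ⊤ := by
    by_contra h
    refine not_integrableOn_Ioi_inv ((lintegral_ofReal_ne_top_iff_integrable
      measurable_inv.aestronglyMeasurable ?_).1 h)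
    filter_upwards [ae_restrict_mem measurableSet_Ioi] with x hx
    exact inv_nonneg.2 (ha.trans hx.out.le)
  refine eq_top_iff.2 (le_trans ?_ (setLIntegral_mono' measurableSet_Ioi
    fun x hx => ENNReal.ofReal_le_ofReal (hf x hx)))
  simp_rw [ENNReal.ofReal_mul hc.le]
  rw [lintegral_const_mul _ measurable_inv.ennreal_ofReal, hinv, ENNReal.mul_top (by simpa using hc)]

lemma lintegral_sq_mul_pinnedRatioDensity :
    ∫⁻ x in Ioi (1 / 2 : ℝ), ENNReal.ofReal (x ^ 2 * pinnedRatioDensity x) = ⊤ := by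
  refine eq_top_iff.2 (le_trans (le_of_eq ?_)
    (lintegral_mono_set (Ioi_subset_Ioi (by norm_num : (1 / 2 : ℝ) ≤ 1))))
  refine (lintegral_ofReal_Ioi_eq_top_of_inv_le zero_le_one (by norm_num : (0 : ℝ) < 2 / 3) ?_).symm
  intro x hx
  have hx0 : 0 < x := one_pos.trans hx
  have harccos : π / 3 ≤ arccos (1 / (2 * x)) := by
    rw [← arccos_eq_of_eq_cos (by positivity) (by linarith [pi_pos]) cos_pi_div_three.symm]
    exact arccos_le_arccos ((div_le_div_iff₀ (by positivity) two_pos).2 (by linarith [hx.out]))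
  rw [pinnedRatioDensity_eq_arccos]
  calc 2 / 3 * x⁻¹ = 2 / π * (π / 3) / x := by field_simp [pi_ne_zero]
    _ ≤ 2 / π * arccos (1 / (2 * x)) / x := by gcongr
    _ = x ^ 2 * (2 / π * (arccos (1 / (2 * x)) / x ^ 3)) := by field_simp

theorem pinned_b_div_a_density :
    (∫ x in Set.Ioi (1 / 2 : ℝ),
      (1 / x ^ 3 - (2 / (π * x ^ 3)) * Real.arcsin (1 / (2 * x)))) = 1 ∧
    (∫ x in Set.Ioi (1 / 2 : ℝ),
      x * (1 / x ^ 3 - (2 / (π * x ^ 3)) * Real.arcsin (1 / (2 * x)))) = 4 / π ∧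
    (∫⁻ x in Set.Ioi (1 / 2 : ℝ),
      ENNReal.ofReal (x ^ 2 *
        (1 / x ^ 3 - (2 / (π * x ^ 3)) * Real.arcsin (1 / (2 * x))))) = ⊤ :=
  ⟨integral_pinnedRatioDensity, integral_mul_pinnedRatioDensity,
    lintegral_sq_mul_pinnedRatioDensity⟩
end

section
/- The double integral 2∫₀^{π/2}∫_{π/2−α}^{π/2} exp(−(π/4)·[sin(α−β)² + 4sin(α)²sin(β)²]/sin(α+β)²)·sin(α)sin(β)/sin(α+β)³ dβ dα equals e^{−π/4} − erfc(√π/2). -/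
/-!
Put C = p in the upper half-plane. The triangle ABC is acute exactly when |p.1| < 1/2 (angles
at A and B) and |p| > 1/2 (angle at C, by Thales), and the law of sines gives
|AC| = sin β / sin (α + β). Substituting this length for β turns the double integral into the
integral of exp (-π |p|²) over that region, written in polar coordinates about A. The region is
the half-strip |p.1| < 1/2, p.2 > 0 minus the upper half of the disc |p| ≤ 1/2: by Fubini the
half-strip contributes (1 - erfc (√π / 2)) / 2, and in polar coordinates about the origin the
half-disc contributes (1 - e^{-π/4}) / 2.
-/

open Real MeasureTheory

open Set

lemma erfc_sqrt_pi_mul (a : ℝ) : erfc (√π * a) = 2 * ∫ x in Ioi a, exp (-π * x ^ 2) := by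
  have hπ : 0 < √π := sqrt_pos.mpr pi_pos
  have hsubst := integral_comp_mul_left_Ioi (fun s => exp (-s ^ 2)) a hπ
  simp only [mul_pow, sq_sqrt pi_pos.le, smul_eq_mul] at hsubst
  rw [erfc]
  simp only [neg_mul, hsubst]
  field_simp

lemma integral_Ioo_neg_self_exp_neg_pi_mul_sq {a : ℝ} (ha : 0 ≤ a) :
    ∫ x in Ioo (-a) a, exp (-π * x ^ 2) = 1 - erfc (√π * a) := by
  set f : ℝ → ℝ := fun x => exp (-π * x ^ 2)
  have hf : Integrable f := integrable_exp_neg_mul_sq pi_pos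
  have htotal : ∫ x, f x = 1 := by
    simp only [f, integral_gaussian, div_self pi_pos.ne', sqrt_one]
  have hleft : ∫ x in Iic (-a), f x = ∫ x in Ioi a, f x := by
    rw [← integral_comp_neg_Ioi]
    simp only [f, neg_sq]
  have hright : ∫ x in Ioi (-a), f x = (∫ x in Ioo (-a) a, f x) + ∫ x in Ioi a, f x := by
    rw [← integral_Ioc_eq_integral_Ioo, ← setIntegral_union (Ioc_disjoint_Ioi le_rfl)
      measurableSet_Ioi hf.integrableOn hf.integrableOn, Ioc_union_Ioi_eq_Ioi (by linarith)]
  have hsplit := intervalIntegral.integral_Iic_add_Ioi (b := -a) hf.integrableOn hf.integrableOn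
  rw [erfc_sqrt_pi_mul]
  linarith

lemma integral_Ioc_mul_exp_neg_mul_sq {b R : ℝ} (hb : b ≠ 0) (hR : 0 ≤ R) :
    ∫ r in Ioc 0 R, r * exp (-b * r ^ 2) = (1 - exp (-b * R ^ 2)) / (2 * b) := by
  have hderiv : ∀ r ∈ uIcc 0 R,
      HasDerivAt (fun r => -exp (-b * r ^ 2) / (2 * b)) (r * exp (-b * r ^ 2)) r := by
    intro r _
    refine (((hasDerivAt_pow 2 r).const_mul (-b)).exp.neg.div_const (2 * b)).congr_deriv ?_
    field_simp
    ring
  rw [← intervalIntegral.integral_of_le hR, intervalIntegral.integral_eq_sub_of_hasDerivAt hderiv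
    (Continuous.intervalIntegrable (by fun_prop) _ _), zero_pow two_ne_zero, mul_zero, exp_zero]
  ring

lemma sin_pos_iff_of_mem_Ioo {θ : ℝ} (hθ : θ ∈ Ioo (-π) π) : 0 < sin θ ↔ θ ∈ Ioo 0 π :=
  ⟨fun h => ⟨not_le.1 fun h0 => h.not_ge (sin_nonpos_of_nonpos_of_neg_pi_le h0 hθ.1.le), hθ.2⟩,
    sin_pos_of_mem_Ioo⟩

section

variable {E : Type*} [NormedAddCommGroup E] [NormedSpace ℝ E]

lemma injOn_polarCoord_symm_add (c : ℝ × ℝ) :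
    InjOn (fun q => polarCoord.symm q + c) polarCoord.target :=
  fun _ hp _ hq h => polarCoord.symm.injOn hp hq (add_right_cancel h)

lemma hasFDerivWithinAt_polarCoord_symm_add (c : ℝ × ℝ) (s : Set (ℝ × ℝ)) (q : ℝ × ℝ) :
    HasFDerivWithinAt (fun q => polarCoord.symm q + c) (fderivPolarCoordSymm q) s q :=
  ((hasFDerivAt_polarCoord_symm q).add_const c).hasFDerivWithinAt

lemma abs_det_fderivPolarCoordSymm {q : ℝ × ℝ} (hq : q ∈ polarCoord.target) :
    |(fderivPolarCoordSymm q).det| = q.1 := by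
  rw [det_fderivPolarCoordSymm, abs_of_pos hq.1]

lemma setIntegral_image_polarCoord_symm_add (c : ℝ × ℝ) {s : Set (ℝ × ℝ)} (hs : MeasurableSet s)
    (hst : s ⊆ polarCoord.target) (g : ℝ × ℝ → E) :
    ∫ p in (fun q => polarCoord.symm q + c) '' s, g p =
      ∫ q in s, q.1 • g (polarCoord.symm q + c) := by
  rw [integral_image_eq_integral_abs_det_fderiv_smul volume hs
    (fun q _ => hasFDerivWithinAt_polarCoord_symm_add c s q)
    ((injOn_polarCoord_symm_add c).mono hst)]
  exact setIntegral_congr_fun hs fun q hq => by rw [abs_det_fderivPolarCoordSymm (hst hq)]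

lemma integrableOn_image_polarCoord_symm_add_iff (c : ℝ × ℝ) {s : Set (ℝ × ℝ)}
    (hs : MeasurableSet s) (hst : s ⊆ polarCoord.target) (g : ℝ × ℝ → E) :
    IntegrableOn g ((fun q => polarCoord.symm q + c) '' s) ↔
      IntegrableOn (fun q => q.1 • g (polarCoord.symm q + c)) s := by
  rw [integrableOn_image_iff_integrableOn_abs_det_fderiv_smul volume hs
    (fun q _ => hasFDerivWithinAt_polarCoord_symm_add c s q)
    ((injOn_polarCoord_symm_add c).mono hst)]
  exact integrableOn_congr_fun (fun q hq => by rw [abs_det_fderivPolarCoordSymm (hst hq)]) hs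

lemma image_polarCoord_symm_add_eq {c : ℝ × ℝ} {s D : Set (ℝ × ℝ)}
    (hst : s ⊆ polarCoord.target) (hD : ∀ p ∈ D, p - c ∈ polarCoord.source)
    (hmem : ∀ q ∈ polarCoord.target, polarCoord.symm q + c ∈ D ↔ q ∈ s) :
    (fun q => polarCoord.symm q + c) '' s = D := by
  ext p
  constructor
  · rintro ⟨q, hq, rfl⟩
    exact (hmem q (hst hq)).2 hq
  · intro hp
    have hinv : polarCoord.symm (polarCoord (p - c)) + c = p := by
      rw [polarCoord.left_inv (hD p hp), sub_add_cancel]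
    refine ⟨polarCoord (p - c), ?_, hinv⟩
    rw [← hmem _ (polarCoord.map_source (hD p hp)), hinv]
    exact hp

lemma measurableSet_setOf_snd_mem_and_fst_mem_Ioo {I : Set ℝ} {a b : ℝ → ℝ}
    (hI : MeasurableSet I) (ha : Measurable a) (hb : Measurable b) :
    MeasurableSet {q : ℝ × ℝ | q.2 ∈ I ∧ q.1 ∈ Ioo (a q.2) (b q.2)} :=
  (measurable_snd hI).inter <|
    (measurableSet_lt (ha.comp measurable_snd) measurable_fst).inter
      (measurableSet_lt measurable_fst (hb.comp measurable_snd))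

lemma setIntegral_setOf_snd_mem_and_fst_mem_Ioo {I : Set ℝ} {a b : ℝ → ℝ}
    (hI : MeasurableSet I) (ha : Measurable a) (hb : Measurable b) {f : ℝ × ℝ → E}
    (hf : IntegrableOn f {q | q.2 ∈ I ∧ q.1 ∈ Ioo (a q.2) (b q.2)}) :
    ∫ q in {q | q.2 ∈ I ∧ q.1 ∈ Ioo (a q.2) (b q.2)}, f q =
      ∫ y in I, ∫ x in Ioo (a y) (b y), f (x, y) := by
  have hT := measurableSet_setOf_snd_mem_and_fst_mem_Ioo hI ha hb
  rw [← integral_indicator hT, Measure.volume_eq_prod,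
    integral_prod_symm _ ((integrable_indicator_iff hT).2 hf), ← integral_indicator hI]
  congr 1 with y
  by_cases hy : y ∈ I
  · rw [indicator_of_mem hy, ← integral_indicator measurableSet_Ioo]
    congr 1 with x
    simp [indicator, hy]
  · simp [hy]

end

noncomputable def expNegPiNormSq (p : ℝ × ℝ) : ℝ := exp (-π * (p.1 ^ 2 + p.2 ^ 2))

lemma expNegPiNormSq_eq_mul (p : ℝ × ℝ) :
    expNegPiNormSq p = exp (-π * p.1 ^ 2) * exp (-π * p.2 ^ 2) := by
  rw [expNegPiNormSq, ← exp_add, mul_add]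

lemma integrable_expNegPiNormSq : Integrable expNegPiNormSq := by
  simp only [funext expNegPiNormSq_eq_mul, Measure.volume_eq_prod]
  exact (integrable_exp_neg_mul_sq pi_pos).mul_prod (integrable_exp_neg_mul_sq pi_pos)

lemma sq_add_sq_polarCoord_symm (q : ℝ × ℝ) :
    (polarCoord.symm q).1 ^ 2 + (polarCoord.symm q).2 ^ 2 = q.1 ^ 2 := by
  simp only [polarCoord_symm_apply]
  linear_combination q.1 ^ 2 * cos_sq_add_sin_sq q.2

lemma expNegPiNormSq_polarCoord_symm (q : ℝ × ℝ) :
    expNegPiNormSq (polarCoord.symm q) = exp (-π * q.1 ^ 2) := by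
  rw [expNegPiNormSq, sq_add_sq_polarCoord_symm]

lemma integral_Ioo_prod_Ioi_expNegPiNormSq {a : ℝ} (ha : 0 ≤ a) :
    ∫ p in Ioo (-a) a ×ˢ Ioi 0, expNegPiNormSq p = (1 - erfc (√π * a)) / 2 := by
  simp only [expNegPiNormSq_eq_mul, Measure.volume_eq_prod]
  rw [setIntegral_prod_mul (fun x => exp (-π * x ^ 2)) (fun y => exp (-π * y ^ 2)),
    integral_Ioo_neg_self_exp_neg_pi_mul_sq ha, integral_gaussian_Ioi, div_self pi_pos.ne',
    sqrt_one]
  ring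

def upperHalfDisk (R : ℝ) : Set (ℝ × ℝ) := {p | 0 < p.2 ∧ p.1 ^ 2 + p.2 ^ 2 ≤ R ^ 2}

lemma measurableSet_upperHalfDisk (R : ℝ) : MeasurableSet (upperHalfDisk R) :=
  (measurableSet_lt measurable_const measurable_snd).inter
    (measurableSet_le (by fun_prop : Measurable fun p : ℝ × ℝ => p.1 ^ 2 + p.2 ^ 2)
      measurable_const)

lemma Ioc_prod_Ioo_subset_polarCoord_target (R : ℝ) :
    Ioc 0 R ×ˢ Ioo 0 π ⊆ polarCoord.target :=
  prod_mono Ioc_subset_Ioi_self (Ioo_subset_Ioo_left (by linarith [pi_pos]))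

lemma polarCoord_symm_mem_upperHalfDisk_iff {R : ℝ} (hR : 0 ≤ R) {q : ℝ × ℝ}
    (hq : q ∈ polarCoord.target) :
    polarCoord.symm q ∈ upperHalfDisk R ↔ q ∈ Ioc 0 R ×ˢ Ioo 0 π := by
  obtain ⟨hr, hθ⟩ := hq
  rw [upperHalfDisk, mem_ofPred_eq, sq_add_sq_polarCoord_symm, polarCoord_symm_apply,
    mul_pos_iff_of_pos_left hr, sin_pos_iff_of_mem_Ioo hθ, sq_le_sq₀ hr.le hR]
  exact ⟨fun ⟨hθ', hrR⟩ => ⟨⟨hr, hrR⟩, hθ'⟩, fun ⟨⟨_, hrR⟩, hθ'⟩ => ⟨hθ', hrR⟩⟩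

lemma image_polarCoord_symm_Ioc_prod_Ioo {R : ℝ} (hR : 0 ≤ R) :
    polarCoord.symm '' (Ioc 0 R ×ˢ Ioo 0 π) = upperHalfDisk R := by
  simpa only [add_zero] using image_polarCoord_symm_add_eq (c := 0)
    (Ioc_prod_Ioo_subset_polarCoord_target R) (fun p hp => Or.inr (by simpa using hp.1.ne'))
    fun q hq => by rw [add_zero]; exact polarCoord_symm_mem_upperHalfDisk_iff hR hq

lemma integral_upperHalfDisk_expNegPiNormSq {R : ℝ} (hR : 0 ≤ R) :
    ∫ p in upperHalfDisk R, expNegPiNormSq p = (1 - exp (-π * R ^ 2)) / 2 := by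
  have hpolar := setIntegral_image_polarCoord_symm_add 0 (measurableSet_Ioc.prod measurableSet_Ioo)
    (Ioc_prod_Ioo_subset_polarCoord_target R) expNegPiNormSq
  have hprod := setIntegral_prod_mul (μ := volume) (ν := volume)
    (fun r : ℝ => r * exp (-π * r ^ 2)) (fun _ : ℝ => (1 : ℝ)) (Ioc 0 R) (Ioo 0 π)
  simp only [add_zero, expNegPiNormSq_polarCoord_symm, smul_eq_mul] at hpolar
  simp only [mul_one] at hprod
  rw [← image_polarCoord_symm_Ioc_prod_Ioo hR, hpolar, Measure.volume_eq_prod,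
    hprod, integral_Ioc_mul_exp_neg_mul_sq pi_pos.ne' hR, setIntegral_const,
    Real.volume_real_Ioo_of_le pi_pos.le]
  field_simp
  ring

def acuteApexRegion : Set (ℝ × ℝ) := {p | 0 < p.2 ∧ |p.1| < 1 / 2 ∧ 1 / 4 < p.1 ^ 2 + p.2 ^ 2}

lemma Ioo_prod_Ioi_eq_acuteApexRegion_union_upperHalfDisk :
    Ioo (-(1 / 2)) (1 / 2) ×ˢ Ioi 0 = acuteApexRegion ∪ upperHalfDisk (1 / 2) := by
  ext ⟨x, y⟩
  simp only [mem_prod, mem_Ioo, mem_Ioi, mem_union, acuteApexRegion, upperHalfDisk,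
    mem_ofPred_eq, abs_lt]
  constructor
  · rintro ⟨hx, hy⟩
    rcases le_or_gt (x ^ 2 + y ^ 2) ((1 / 2) ^ 2) with h | h
    · exact Or.inr ⟨hy, h⟩
    · exact Or.inl ⟨hy, hx, by linarith⟩
  · rintro (⟨hy, hx, -⟩ | ⟨hy, h⟩)
    · exact ⟨hx, hy⟩
    · exact ⟨⟨by nlinarith, by nlinarith⟩, hy⟩

lemma disjoint_acuteApexRegion_upperHalfDisk : Disjoint acuteApexRegion (upperHalfDisk (1 / 2)) :=
  disjoint_left.2 fun _ hS hD => by linarith [hS.2.2, hD.2]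

lemma integral_acuteApexRegion_expNegPiNormSq :
    ∫ p in acuteApexRegion, expNegPiNormSq p = (exp (-π / 4) - erfc (√π / 2)) / 2 := by
  have hunion := setIntegral_union disjoint_acuteApexRegion_upperHalfDisk
    (measurableSet_upperHalfDisk _)
    integrable_expNegPiNormSq.integrableOn integrable_expNegPiNormSq.integrableOn
  rw [← Ioo_prod_Ioi_eq_acuteApexRegion_union_upperHalfDisk,
    integral_Ioo_prod_Ioi_expNegPiNormSq (by norm_num),
    integral_upperHalfDisk_expNegPiNormSq (by norm_num)] at hunion
  rw [show -π / 4 = -π * (1 / 2) ^ 2 by ring, show √π / 2 = √π * (1 / 2) by ring]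
  linarith

-- `acuteApexRegion` in polar coordinates `(r, θ)` about `A = (-1/2, 0)`.
def acuteApexRegionPolar : Set (ℝ × ℝ) :=
  {q | q.2 ∈ Ioo 0 (π / 2) ∧ q.1 ∈ Ioo (cos q.2) (cos q.2)⁻¹}

lemma measurableSet_acuteApexRegionPolar : MeasurableSet acuteApexRegionPolar :=
  measurableSet_setOf_snd_mem_and_fst_mem_Ioo measurableSet_Ioo measurable_cos
    measurable_cos.inv

lemma acuteApexRegionPolar_subset_target : acuteApexRegionPolar ⊆ polarCoord.target := by
  rintro ⟨r, θ⟩ ⟨⟨hθ0, hθ⟩, hr, -⟩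
  have hcos : 0 < cos θ := cos_pos_of_mem_Ioo ⟨by linarith, hθ⟩
  exact ⟨hcos.trans hr, by linarith, by linarith⟩

lemma polarCoord_symm_add_mem_acuteApexRegion_iff {q : ℝ × ℝ} (hq : q ∈ polarCoord.target) :
    polarCoord.symm q + (-(1 / 2), 0) ∈ acuteApexRegion ↔ q ∈ acuteApexRegionPolar := by
  obtain ⟨r, θ⟩ := q
  obtain ⟨hr, hθ⟩ := hq
  simp only [mem_Ioi] at hr
  have hsq : (r * cos θ - 1 / 2) ^ 2 + (r * sin θ) ^ 2 = r ^ 2 - r * cos θ + 1 / 4 := by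
    linear_combination r ^ 2 * sin_sq_add_cos_sq θ
  simp only [acuteApexRegion, acuteApexRegionPolar, polarCoord_symm_apply, Prod.mk_add_mk,
    add_zero, ← sub_eq_add_neg, mem_ofPred_eq, hsq, abs_lt, mem_Ioo]
  constructor
  · rintro ⟨hsin, ⟨hx0, hx1⟩, hfar⟩
    have hθpos := (sin_pos_iff_of_mem_Ioo hθ).1 (pos_of_mul_pos_right hsin hr.le)
    have hcos : 0 < cos θ := pos_of_mul_pos_right (by linarith : 0 < r * cos θ) hr.le
    refine ⟨⟨hθpos.1, ?_⟩, by nlinarith, ?_⟩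
    · by_contra! h
      linarith [cos_nonpos_of_pi_div_two_le_of_le h (by linarith [hθpos.2])]
    · rw [← one_div, lt_div_iff₀ hcos]
      linarith
  · rintro ⟨⟨hθ0, hθ1⟩, hcos_lt, hlt_inv⟩
    have hcos : 0 < cos θ := cos_pos_of_mem_Ioo ⟨by linarith, hθ1⟩
    have hsin : 0 < sin θ := sin_pos_of_pos_of_lt_pi hθ0 (by linarith)
    have hrcos : r * cos θ < 1 := by rwa [← one_div, lt_div_iff₀ hcos] at hlt_inv
    exact ⟨by positivity, ⟨by nlinarith, by linarith⟩, by nlinarith⟩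

lemma image_polarCoord_symm_add_acuteApexRegionPolar :
    (fun q => polarCoord.symm q + (-(1 / 2), 0)) '' acuteApexRegionPolar = acuteApexRegion :=
  image_polarCoord_symm_add_eq acuteApexRegionPolar_subset_target
    (fun p hp => Or.inr (by simpa using hp.1.ne'))
    (fun _ hq => polarCoord_symm_add_mem_acuteApexRegion_iff hq)

lemma expNegPiNormSq_polarCoord_symm_add (q : ℝ × ℝ) :
    expNegPiNormSq (polarCoord.symm q + (-(1 / 2), 0)) =
      exp (-π * (q.1 ^ 2 - q.1 * cos q.2 + 1 / 4)) := by
  rw [expNegPiNormSq]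
  congr 1
  simp only [polarCoord_symm_apply, Prod.mk_add_mk, add_zero]
  linear_combination -π * q.1 ^ 2 * sin_sq_add_cos_sq q.2

lemma integral_acuteApexRegion_eq_integral_polar :
    ∫ p in acuteApexRegion, expNegPiNormSq p =
      ∫ θ in Ioo 0 (π / 2), ∫ r in Ioo (cos θ) (cos θ)⁻¹,
        r * exp (-π * (r ^ 2 - r * cos θ + 1 / 4)) := by
  have hint := (integrableOn_image_polarCoord_symm_add_iff (-(1 / 2), 0)
    measurableSet_acuteApexRegionPolar
    acuteApexRegionPolar_subset_target expNegPiNormSq).1 integrable_expNegPiNormSq.integrableOn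
  rw [← image_polarCoord_symm_add_acuteApexRegionPolar, setIntegral_image_polarCoord_symm_add _
    measurableSet_acuteApexRegionPolar acuteApexRegionPolar_subset_target,
    acuteApexRegionPolar, setIntegral_setOf_snd_mem_and_fst_mem_Ioo (b := fun θ => (cos θ)⁻¹)
      measurableSet_Ioo measurable_cos measurable_cos.inv hint]
  simp only [expNegPiNormSq_polarCoord_symm_add, smul_eq_mul]

lemma hasDerivAt_sin_div_sin_add {α β : ℝ} (h : sin (α + β) ≠ 0) :
    HasDerivAt (fun β => sin β / sin (α + β)) (sin α / sin (α + β) ^ 2) β := by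
  have hshift : HasDerivAt (fun β => sin (α + β)) (cos (α + β)) β := by
    simpa using ((hasDerivAt_id β).const_add α).sin
  refine ((hasDerivAt_sin β).div hshift h).congr_deriv ?_
  rw [mul_comm (cos β), mul_comm (sin β), ← sin_sub, add_sub_cancel_right]

lemma sin_sub_sq_add_four_mul_sin_sq_mul_sin_sq (α β : ℝ) :
    sin (α - β) ^ 2 + 4 * sin α ^ 2 * sin β ^ 2 =
      4 * sin β ^ 2 - 4 * sin β * cos α * sin (α + β) + sin (α + β) ^ 2 := by
  rw [sin_sub, sin_add]
  linear_combination 4 * sin β ^ 2 * sin_sq_add_cos_sq α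

lemma integral_acute_angle_density_eq {α : ℝ} (hα : α ∈ Ioo 0 (π / 2)) :
    ∫ β in Ioo (π / 2 - α) (π / 2),
        exp (-(π / 4) * (sin (α - β) ^ 2 + 4 * sin α ^ 2 * sin β ^ 2) / sin (α + β) ^ 2) *
          (sin α * sin β / sin (α + β) ^ 3) =
      ∫ t in Ioo (cos α) (cos α)⁻¹, t * exp (-π * (t ^ 2 - t * cos α + 1 / 4)) := by
  obtain ⟨hα0, hα1⟩ := hα
  have hcos : 0 < cos α := cos_pos_of_mem_Ioo ⟨by linarith, hα1⟩
  have hle : π / 2 - α ≤ π / 2 := by linarith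
  have hcos_le : cos α ≤ (cos α)⁻¹ := (cos_le_one α).trans ((one_le_inv₀ hcos).2 (cos_le_one α))
  have hsin : ∀ β ∈ uIcc (π / 2 - α) (π / 2), 0 < sin (α + β) := by
    intro β hβ
    rw [uIcc_of_le hle] at hβ
    exact sin_pos_of_pos_of_lt_pi (by linarith [hβ.1]) (by linarith [hβ.2])
  -- `t = sin β / sin (α + β)` is the side `|AC|`, by the law of sines.
  have hsubst := intervalIntegral.integral_comp_mul_deriv
    (g := fun t => t * exp (-π * (t ^ 2 - t * cos α + 1 / 4)))
    (fun β hβ => hasDerivAt_sin_div_sin_add (hsin β hβ).ne')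
    (continuousOn_const.div (by fun_prop) fun β hβ => pow_ne_zero 2 (hsin β hβ).ne')
    (by fun_prop)
  have hstart : sin (π / 2 - α) / sin (α + (π / 2 - α)) = cos α := by
    rw [add_sub_cancel, sin_pi_div_two, sin_pi_div_two_sub, div_one]
  have hend : sin (π / 2) / sin (α + π / 2) = (cos α)⁻¹ := by
    rw [sin_pi_div_two, sin_add_pi_div_two, one_div]
  simp only [Function.comp_def, hstart, hend] at hsubst
  rw [← integral_Ioc_eq_integral_Ioo, ← integral_Ioc_eq_integral_Ioo,
    ← intervalIntegral.integral_of_le hle,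
    ← intervalIntegral.integral_of_le hcos_le, ← hsubst]
  refine intervalIntegral.integral_congr fun β hβ => ?_
  have hs := (hsin β hβ).ne'
  simp only [sin_sub_sq_add_four_mul_sin_sq_mul_sin_sq]
  field_simp

theorem anchored_acute_probability :
    2 * ∫ α in Set.Ioo (0:ℝ) (π / 2), ∫ β in Set.Ioo (π / 2 - α) (π / 2),
        Real.exp (-(π / 4) * (Real.sin (α - β) ^ 2 + 4 * Real.sin α ^ 2 * Real.sin β ^ 2) /
            Real.sin (α + β) ^ 2) *
          (Real.sin α * Real.sin β / Real.sin (α + β) ^ 3) =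
      Real.exp (-π / 4) - erfc (Real.sqrt π / 2) := by
  rw [setIntegral_congr_fun measurableSet_Ioo fun α hα => integral_acute_angle_density_eq hα,
    ← integral_acuteApexRegion_eq_integral_polar, integral_acuteApexRegion_expNegPiNormSq]
  ring
end

section
/- For the transformation u = tan(α)/(tan(α)+tan(β)), v = tan(α)tan(β)/(tan(α)+tan(β)) from (u,v) with v > 0 to angles (α,β) ∈ (0,π)² with α+β < π, the Jacobian determinant of (u,v) ↦ (α,β) equals v/((u²+v²)·((1−u)²+v²)). -/
open Real MeasureTheory

theorem hasDerivAt_arctan_div_const (c x : ℝ) (hc : c ≠ 0) :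
    HasDerivAt (fun t => arctan (t / c)) (c / (c ^ 2 + x ^ 2)) x := by
  convert ((hasDerivAt_id x).div_const c).arctan using 1
  · rfl
  · rw [id_eq]
    field_simp

theorem hasDerivAt_arctan_const_div (c x : ℝ) (hx : x ≠ 0) :
    HasDerivAt (fun t => arctan (c / t)) (-(c / (x ^ 2 + c ^ 2))) x := by
  have hinv : HasDerivAt (fun t => c / t) (-(c / x ^ 2)) x := by
    simpa only [div_eq_mul_inv, neg_mul_eq_mul_neg] using (hasDerivAt_inv hx).const_mul c
  convert hinv.arctan using 1
  field_simp

theorem hasDerivAt_arctan_const_div_one_sub (c x : ℝ) (hx : 1 - x ≠ 0) :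
    HasDerivAt (fun t => arctan (c / (1 - t))) (c / ((1 - x) ^ 2 + c ^ 2)) x := by
  have h := (hasDerivAt_arctan_const_div c (1 - x) hx).comp x ((hasDerivAt_id x).const_sub 1)
  rwa [mul_neg_one, neg_neg] at h

theorem staked_jacobian_general (u v : ℝ) (hu0 : 0 < u) (hu1 : u < 1) :
    Matrix.det
      !![deriv (fun t => Real.arctan (v / (1 - t))) u,
         deriv (fun t => Real.arctan (t / (1 - u))) v;
         deriv (fun t => Real.arctan (v / t)) u,
         deriv (fun t => Real.arctan (t / u)) v] =
      v / ((u ^ 2 + v ^ 2) * ((1 - u) ^ 2 + v ^ 2)) := by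
  have h1u : 1 - u ≠ 0 := by linarith
  rw [(hasDerivAt_arctan_const_div_one_sub v u h1u).deriv,
    (hasDerivAt_arctan_div_const (1 - u) v h1u).deriv,
    (hasDerivAt_arctan_const_div v u hu0.ne').deriv,
    (hasDerivAt_arctan_div_const u v hu0.ne').deriv, Matrix.det_fin_two_of]
  have hA : u ^ 2 + v ^ 2 ≠ 0 := by positivity
  have hB : (1 - u) ^ 2 + v ^ 2 ≠ 0 := by positivity
  field_simp
  ring

theorem staked_jacobian (u v : ℝ) (hv : 0 < v) (hu0 : 0 < u) (hu1 : u < 1) :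
    Matrix.det
      !![deriv (fun t => Real.arctan (v / (1 - t))) u,
         deriv (fun t => Real.arctan (t / (1 - u))) v;
         deriv (fun t => Real.arctan (v / t)) u,
         deriv (fun t => Real.arctan (t / u)) v] =
      v / ((u ^ 2 + v ^ 2) * ((1 - u) ^ 2 + v ^ 2)) :=
  staked_jacobian_general u v hu0 hu1
end
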